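/- Let S be a finite commutative Clifford semigroup and K a field such that either (i) K is a splitting field of S, or (ii) K has characteristic p and exp(S) is a power of the prime p. Then for each a ∈ S the cyclic subsemigroup ⟨a⟩ is a group, the Green class H_a is a maximal subgroup of S containing a, and Γ(H_a) ≅ H_a. In particular d(S,K) = max_{a∈S} d(Γ(H_a),K) = max_H d(H,K), where H ranges over all subgroups of S. -/

import Mathlib

namespace ZS

variable (S : Type*) [AddCommSemigroup S]

/-- `nsmul' n x = (n+1)·x`, iterated addition in a semigroup. -/
def nsmul' : ℕ → S → S
  | 0, x => x
  | n + 1, x => x + nsmul' n x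

/-- The cyclic subsemigroup `⟨x⟩ = {x, 2x, 3x, …}` generated by `x`. -/
def cyc (x : S) : Set S := Set.range fun n => nsmul' S n x

/-- `x` is periodic if `⟨x⟩` is finite. -/
def IsPeriodicElem (x : S) : Prop := (cyc S x).Finite

/-- A semigroup is periodic if every element is periodic. -/
def IsPeriodicSemigroup : Prop := ∀ x : S, IsPeriodicElem S x

/-- `ρ(x)`: the least `m ≥ 1` such that `m·x` is idempotent (equivalently `m·x = e(x)`). -/
noncomputable def rho (x : S) : ℕ :=
  sInf {n : ℕ | nsmul' S n x + nsmul' S n x = nsmul' S n x} + 1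

/-- `e(x)`: the unique idempotent of the finite cyclic semigroup `⟨x⟩`. -/
noncomputable def eIdem (x : S) : S :=
  nsmul' S (sInf {n : ℕ | nsmul' S n x + nsmul' S n x = nsmul' S n x}) x

/-- The period of a (periodic) element `x`: the least `n > 0` with `(m+n)x = mx` for some `m`. -/
noncomputable def period (x : S) : ℕ :=
  sInf {n : ℕ | 0 < n ∧ ∃ m : ℕ, nsmul' S (m + n) x = nsmul' S m x}

/-- The index of a (periodic) element `x`: the least `k ≥ 1` with `kx = tx` for some `t ≠ k`. -/
noncomputable def indexOf (x : S) : ℕ :=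
  sInf {k : ℕ | ∃ t : ℕ, t ≠ k ∧ nsmul' S k x = nsmul' S t x} + 1

/-- `exp(S)`: the lcm of the periods of the elements of `S`, described as the least positive
common multiple of all the periods. -/
noncomputable def expS : ℕ := sInf {n : ℕ | 0 < n ∧ ∀ x : S, period S x ∣ n}

/-- `K` is a splitting field for exponent `n`: it contains exactly `n` `n`-th roots of unity. -/
def SplitField (K : Type*) [Field K] (n : ℕ) : Prop := Set.ncard {ζ : K | ζ ^ n = 1} = n

/-- Green's preorder `a ≼_𝓗 b`. -/
def gLe (a b : S) : Prop := a = b ∨ ∃ c : S, a = b + c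

/-- Green's congruence `a 𝓗 b`. -/
def gEq (a b : S) : Prop := gLe S a b ∧ gLe S b a

/-- `a ≺_𝓗 b`. -/
def gLt (a b : S) : Prop := gLe S a b ∧ ¬ gLe S b a

/-- The Green class `H_a`. -/
def HClass (a : S) : Set S := {x : S | gEq S x a}

/-- The stabilizer `St(H_a)` of the Green class of `a`. -/
def stab (a : S) : Set S := {c : S | ∀ x ∈ HClass S a, c + x ∈ HClass S a}

theorem gLe_trans {a b c : S} (h1 : gLe S a b) (h2 : gLe S b c) : gLe S a c := by
  rcases h1 with rfl | ⟨u, rfl⟩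
  · exact h2
  · rcases h2 with rfl | ⟨v, rfl⟩
    · exact Or.inr ⟨u, rfl⟩
    · exact Or.inr ⟨v + u, by rw [add_assoc]⟩

theorem gLe_add_right {a b : S} (x : S) (h : gLe S a b) : gLe S (a + x) (b + x) := by
  rcases h with rfl | ⟨c, rfl⟩
  · exact Or.inl rfl
  · exact Or.inr ⟨c, by rw [add_right_comm]⟩

theorem gEq_add {w x y z : S} (h1 : gEq S w x) (h2 : gEq S y z) : gEq S (w + y) (x + z) := by
  have k1 : gLe S (w + y) (x + y) := gLe_add_right S y h1.1
  have k2 : gLe S (x + y) (x + z) := by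
    have h := gLe_add_right S x h2.1
    rwa [add_comm z x, add_comm y x] at h
  have k3 : gLe S (x + z) (w + z) := gLe_add_right S z h1.2
  have k4 : gLe S (w + z) (w + y) := by
    have h := gLe_add_right S w h2.2
    rwa [add_comm z w, add_comm y w] at h
  exact ⟨gLe_trans S k1 k2, gLe_trans S k3 k4⟩

/-- Green's congruence as an additive congruence. -/
def greenCon : AddCon S where
  r a b := gEq S a b
  iseqv := ⟨fun _ => ⟨Or.inl rfl, Or.inl rfl⟩, fun h => ⟨h.2, h.1⟩,
    fun h1 h2 => ⟨gLe_trans S h1.1 h2.1, gLe_trans S h2.2 h1.2⟩⟩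
  add' h1 h2 := gEq_add S h1 h2

/-- The quotient semigroup `S/𝓗`. -/
abbrev GQuot := (greenCon S).Quotient

/-- The canonical epimorphism `S → S/𝓗`, `a ↦ ā`. -/
def gq (a : S) : GQuot S := (a : (greenCon S).Quotient)

/-- The sum of a sequence (multiset) of elements of `S`, computed in `WithZero S`
(the empty sequence having sum the adjoined zero). -/
def msum (T : Multiset S) : WithZero S := (T.map fun x => (x : WithZero S)).sum

/-- A sequence over a commutative semigroup is (additively) reducible if some proper
(possibly empty) subsequence has the same sum; the empty sequence has sum the identity of `S`,
when `S` has one. -/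
def IsReducible (T : Multiset S) : Prop :=
  (∃ T' : Multiset S, T' ≤ T ∧ T' ≠ T ∧ T' ≠ 0 ∧ msum S T' = msum S T) ∨
    (T ≠ 0 ∧ ∃ z : S, msum S T = ↑z ∧ ∀ s : S, z + s = s)

/-- The Davenport constant `D(S)` of a commutative semigroup. -/
noncomputable def Dav : ℕ∞ :=
  sInf {n : ℕ∞ | ∀ T : Multiset S, (T.card : ℕ∞) ≥ n → IsReducible S T}

/-- The relative Davenport constant `D_a(S)`: the largest length of an additively
irreducible sequence with sum `a`. -/
noncomputable def Drel (a : S) : ℕ∞ :=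
  sSup {n : ℕ∞ | ∃ T : Multiset S,
    T ≠ 0 ∧ ¬ IsReducible S T ∧ msum S T = ↑a ∧ n = (T.card : ℕ∞)}

/-- The Erdős–Burgess constant `I(S)`: the smallest `ℓ` such that every sequence over `S` of
length (at least) `ℓ` has a nonempty subsequence with idempotent sum. -/
noncomputable def EB : ℕ∞ :=
  sInf {n : ℕ∞ | ∀ T : Multiset S, (T.card : ℕ∞) ≥ n →
    ∃ T' : Multiset S, T' ≤ T ∧ T' ≠ 0 ∧ ∃ x : S, msum S T' = ↑x ∧ x + x = x}

/-- The Davenport constant of a (semigroup which is a) group: the smallest `ℓ` such that every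
sequence of length (at least) `ℓ` has a nonempty subsequence whose sum is the identity element. -/
noncomputable def DavGrpSet : ℕ∞ :=
  sInf {n : ℕ∞ | ∀ T : Multiset S, (T.card : ℕ∞) ≥ n →
    ∃ T' : Multiset S, T' ≤ T ∧ T' ≠ 0 ∧ ∃ z : S, msum S T' = ↑z ∧ ∀ x : S, z + x = x}

/-- The Davenport constant of a finite abelian group. -/
noncomputable def DavG (G : Type*) [AddCommMonoid G] : ℕ∞ :=
  sInf {n : ℕ∞ | ∀ T : Multiset G, (T.card : ℕ∞) ≥ n →
    ∃ T' : Multiset G, T' ≤ T ∧ T' ≠ 0 ∧ T'.sum = 0}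

/-- `ψ(a)`: the largest length of a strictly ascending chain of principal ideals starting at
`(a)`. -/
noncomputable def psi (a : S) : ℕ∞ :=
  sSup {n : ℕ∞ | ∃ ℓ : ℕ, n = (ℓ : ℕ∞) ∧
    ∃ c : ℕ → S, c 0 = a ∧ ∀ i < ℓ, gLt S (c i) (c (i + 1))}

/-- `Ψ(S)`: the largest length of a strictly ascending chain of principal ideals of `S`. -/
noncomputable def PsiS : ℕ∞ := ⨆ a : S, psi S a

/-- A subset of a semigroup which is a subgroup: closed under addition, with an identity
and inverses. -/
def IsSubgroupSet (T : Set S) : Prop :=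
  (∀ x ∈ T, ∀ y ∈ T, x + y ∈ T) ∧
    ∃ z ∈ T, (∀ x ∈ T, z + x = x) ∧ ∀ x ∈ T, ∃ y ∈ T, x + y = z

open Classical in
/-- `ε_a`: `0` if `⟨a⟩` is a group, `1` otherwise. -/
noncomputable def eps (a : S) : ℕ∞ := if IsSubgroupSet S (cyc S a) then 0 else 1

/-- The Schützenberger maps on the Green class `H_a`: maps `x ↦ c + x` for `c ∈ St(H_a)`. -/
def GammaSet (a : S) : Set (↥(HClass S a) → ↥(HClass S a)) :=
  {f | ∃ c ∈ stab S a, ∀ x : ↥(HClass S a), (↑(f x) : S) = c + ↑x}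

/-- The Schützenberger group `Γ(H_a)` (as a type; it is empty when `St(H_a) = ∅`). -/
def Gamma (a : S) : Type _ := ↥(GammaSet S a)

instance (a : S) : Add (Gamma S a) :=
  ⟨fun f g => ⟨f.1 ∘ g.1, by
    obtain ⟨c, hc, hfc⟩ := f.2
    obtain ⟨d, hd, hgd⟩ := g.2
    refine ⟨c + d, fun x hx => by rw [add_assoc]; exact hc _ (hd x hx), fun x => ?_⟩
    show (↑(f.1 (g.1 x)) : S) = c + d + ↑x
    rw [hfc (g.1 x), hgd x, add_assoc]⟩⟩

instance (a : S) : AddCommSemigroup (Gamma S a) where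
  add_assoc f g h := Subtype.ext rfl
  add_comm f g := by
    obtain ⟨c, hc, hfc⟩ := f.2
    obtain ⟨d, hd, hgd⟩ := g.2
    apply Subtype.ext
    funext x
    apply Subtype.ext
    show (↑(f.1 (g.1 x)) : S) = ↑(g.1 (f.1 x))
    rw [hfc (g.1 x), hgd x, hgd (f.1 x), hfc x, add_left_comm]

/-- `St(H_a)` as a subsemigroup of `S`. -/
def stabSub (a : S) : AddSubsemigroup S where
  carrier := stab S a
  add_mem' := fun {c d} hc hd x hx => by rw [add_assoc]; exact hc _ (hd x hx)

/-- The canonical surjection `π_a : St(H_a) → Γ(H_a)`, `c ↦ γ_c`. -/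
def gammaMap (a : S) (c : ↥(stabSub S a)) : Gamma S a :=
  ⟨fun x => ⟨(↑c : S) + ↑x, c.2 ↑x x.2⟩, ⟨↑c, c.2, fun _ => rfl⟩⟩

/-- The semigroup algebra `R[X;S]` of a commutative semigroup, realized inside the monoid
algebra of the monoid obtained from `S` by adjoining an identity element. -/
abbrev SAlg (R : Type*) [CommRing R] (S : Type*) [AddCommSemigroup S] :=
  AddMonoidAlgebra R (WithZero S)

/-- The monomial `r·X^s` of the semigroup algebra. -/
noncomputable def Xm (R : Type*) [CommRing R] {S : Type*} [AddCommSemigroup S] (s : S) (r : R) :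
    SAlg R S := AddMonoidAlgebra.single (↑s) r

/-- The factor `X^s - a·X^{e(s)}` of the semigroup algebra. -/
noncomputable def facX (R : Type*) [CommRing R] {S : Type*} [AddCommSemigroup S]
    (s : S) (a : R) : SAlg R S := Xm R s 1 - Xm R (eIdem S s) a

/-- The invariant `d(S,R)`: the supremum of all `ℓ` such that some sequence `s_1,…,s_ℓ` over
`S` satisfies `(X^{s_1} - a_1 X^{e(s_1)}) ⋯ (X^{s_ℓ} - a_ℓ X^{e(s_ℓ)}) ≠ 0` in `R[X;S]` for all
nonzero `a_1, …, a_ℓ ∈ R`. -/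
noncomputable def dd (R : Type*) [CommRing R] (S : Type*) [AddCommSemigroup S] : ℕ∞ :=
  sSup {n : ℕ∞ | ∃ ℓ : ℕ, n = (ℓ : ℕ∞) ∧ ∃ s : Fin ℓ → S,
    ∀ a : Fin ℓ → R, (∀ i, a i ≠ 0) → ∏ i, facX R (s i) (a i) ≠ 0}

/-- `Λ(S)`: the minimum over all generating sets `A` of `S` of `1 + Σ_{a∈A} (ρ(a)-1)`. -/
noncomputable def Lam (S : Type*) [AddCommSemigroup S] : ℕ :=
  sInf {n : ℕ | ∃ A : Finset S,
    AddSubsemigroup.closure (↑A : Set S) = ⊤ ∧ n = 1 + ∑ a ∈ A, (rho S a - 1)}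

/-- An elementary semigroup: an ideal extension of a nilsemigroup `N` by a group with zero
`G ∪ {∞}`. -/
def IsElementary : Prop :=
  ∃ G N : Set S, G ∪ N = Set.univ ∧ Disjoint G N ∧ IsSubgroupSet S G ∧
    (∀ x ∈ N, ∀ s : S, s + x ∈ N) ∧
    ∃ z ∈ N, (∀ s : S, s + z = z) ∧ ∀ x ∈ N, ∃ n : ℕ, nsmul' S n x = z

/-
In a finite semigroup every `x` has an idempotent multiple `e(x)`, and the Clifford condition
gives `x + e(x) = x`. Hence `x 𝓗 e(x)`, two idempotents in one `𝓗`-class coincide, and `H_a` is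
closed under addition: it is a group with identity `e(a)`, inverses coming from `⟨x⟩`. Every
subgroup lies inside a single `𝓗`-class, so `H_a` is a maximal subgroup. A translation by an
element of `St(H_a)` is determined by its value at `e(a)`, whence `Γ(H_a) ≅ H_a`.

If `s_1, …, s_ℓ` witness `d(S,K) ≥ ℓ`, put `e = e(s_1) + ⋯ + e(s_ℓ)`. Each factor
`X^{s_i} - a_i X^{e(s_i)}` is fixed by the idempotent `X^{e(s_i)}`, so the product is fixed by
`X^e`; distributing `X^e` over the factors turns the product into `∏ (X^{s_i+e} - a_i X^e)`,
a product over the group `H_e`. So `d(S,K) ≤ max_a d(H_a,K)`; the reverse inequality holds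
because `d` is monotone under injective homomorphisms.
-/

section Nsmul

variable {S}

theorem add_nsmul' (m n : ℕ) (x : S) :
    nsmul' S (m + n + 1) x = nsmul' S m x + nsmul' S n x := by
  induction m with
  | zero => rw [Nat.zero_add]; rfl
  | succ m ih =>
    rw [show m + 1 + n + 1 = m + n + 1 + 1 by omega]
    exact (congrArg (x + ·) ih).trans (add_assoc _ _ _).symm

theorem nsmul'_add (n : ℕ) (x y : S) :
    nsmul' S n (x + y) = nsmul' S n x + nsmul' S n y := by
  induction n with
  | zero => rfl
  | succ n ih => exact (congrArg (x + y + ·) ih).trans (add_add_add_comm _ _ _ _)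

theorem nsmul'_of_add_self {x : S} (hx : x + x = x) (n : ℕ) : nsmul' S n x = x := by
  induction n with
  | zero => rfl
  | succ n ih => exact (congrArg (x + ·) ih).trans hx

theorem nsmul'_nsmul' (m n : ℕ) (x : S) :
    nsmul' S m (nsmul' S n x) = nsmul' S (m * n + m + n) x := by
  induction m with
  | zero => rw [zero_mul, zero_add, zero_add]; rfl
  | succ m ih =>
    rw [show (m + 1) * n + (m + 1) + n = n + (m * n + m + n) + 1 by ring, add_nsmul', ← ih]
    rfl

theorem map_nsmul' {T : Type*} [AddCommSemigroup T] (f : S →ₙ+ T) (n : ℕ) (x : S) :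
    f (nsmul' S n x) = nsmul' T n (f x) := by
  induction n with
  | zero => rfl
  | succ n ih => exact (map_add f _ _).trans (congrArg (f x + ·) ih)

theorem nsmul'_add_mul_of_eq {x : S} {i d : ℕ} (h : nsmul' S (i + d) x = nsmul' S i x)
    {m : ℕ} (hm : i ≤ m) (k : ℕ) : nsmul' S (m + k * d) x = nsmul' S m x := by
  have step : ∀ m, i ≤ m → nsmul' S (m + d) x = nsmul' S m x := by
    intro m hm
    obtain ⟨_ | t, rfl⟩ := Nat.exists_eq_add_of_le hm
    · exact h
    · rw [show i + (t + 1) + d = t + (i + d) + 1 by omega, add_nsmul', h, ← add_nsmul',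
        show t + i + 1 = i + (t + 1) by omega]
  induction k with
  | zero => rw [zero_mul, add_zero]
  | succ k ih => rw [add_mul, one_mul, ← add_assoc, step _ (by omega), ih]

theorem exists_nsmul'_add_self [Finite S] (x : S) :
    ∃ n, nsmul' S n x + nsmul' S n x = nsmul' S n x := by
  obtain ⟨i, j, hij, h⟩ := Finite.exists_ne_map_eq_of_infinite fun n : ℕ => nsmul' S n x
  obtain ⟨i, d, hd, hper⟩ : ∃ i d, 0 < d ∧ nsmul' S (i + d) x = nsmul' S i x := by
    rcases Nat.lt_or_gt_of_ne hij with hlt | hlt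
    · exact ⟨i, j - i, by omega, by rw [Nat.add_sub_cancel' hlt.le]; exact h.symm⟩
    · exact ⟨j, i - j, by omega, by rw [Nat.add_sub_cancel' hlt.le]; exact h⟩
  -- `n + 1 = (i + 1) * d` is a multiple of the period lying beyond the preperiod `i`
  refine ⟨(i + 1) * d - 1, ?_⟩
  have hn : i + 1 ≤ (i + 1) * d := Nat.le_mul_of_pos_right _ hd
  rw [← add_nsmul', show (i + 1) * d - 1 + ((i + 1) * d - 1) + 1 = (i + 1) * d - 1 + (i + 1) * d
    by omega, nsmul'_add_mul_of_eq hper (by omega)]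

end Nsmul

section Idempotent

variable {S}

theorem eIdem_add_eIdem [Finite S] (x : S) : eIdem S x + eIdem S x = eIdem S x :=
  Nat.sInf_mem (exists_nsmul'_add_self x)

theorem exists_eIdem_eq_nsmul' (x : S) : ∃ r, eIdem S x = nsmul' S r x := ⟨_, rfl⟩

theorem eIdem_gLe (x : S) : gLe S (eIdem S x) x := by
  obtain ⟨_ | r, hr⟩ := exists_eIdem_eq_nsmul' x
  · exact Or.inl hr
  · exact Or.inr ⟨nsmul' S r x, hr⟩

theorem map_eIdem {T : Type*} [AddCommSemigroup T] (f : S →ₙ+ T) (hf : Function.Injective f)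
    (x : S) : f (eIdem S x) = eIdem T (f x) := by
  have hidem : ∀ n, (nsmul' S n x + nsmul' S n x = nsmul' S n x ↔
      nsmul' T n (f x) + nsmul' T n (f x) = nsmul' T n (f x)) := fun n => by
    rw [← map_nsmul', ← map_add, hf.eq_iff]
  simp only [eIdem, hidem, map_nsmul']

theorem exists_nsmul'_add_eq_eIdem [Finite S] (x : S) (k : ℕ) :
    ∃ j, nsmul' S k x + nsmul' S j x = eIdem S x := by
  obtain ⟨r, hr⟩ := exists_eIdem_eq_nsmul' x
  refine ⟨k * r + 2 * r, ?_⟩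
  rw [← add_nsmul', show k + (k * r + 2 * r) + 1 = k * r + k + r + r + 1 by ring, add_nsmul',
    ← nsmul'_nsmul', ← hr, nsmul'_of_add_self (eIdem_add_eIdem x), eIdem_add_eIdem]

end Idempotent

def IsClifford (S : Type*) [AddCommSemigroup S] : Prop :=
  ∀ a : S, ∃ a' : S, a + a' + a = a ∧ a' + a + a' = a'

section Clifford

variable {S} [Finite S]

theorem add_eIdem (hS : IsClifford S) (x : S) : x + eIdem S x = x := by
  obtain ⟨x', hx', -⟩ := hS x
  obtain ⟨r, hr⟩ := exists_eIdem_eq_nsmul' x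
  have he : (x + x') + (x + x') = x + x' := by rw [← add_assoc, hx']
  have hxe : x + (x + x') = x := by rw [← add_assoc, add_right_comm, hx']
  -- `x + x' = (r+1)(x + x') = e(x) + (r+1)x'` absorbs the idempotent `e(x)`
  have hef : (x + x') + eIdem S x = x + x' := by
    rw [← nsmul'_of_add_self he r, nsmul'_add, ← hr, add_right_comm, eIdem_add_eIdem]
  calc x + eIdem S x = x + (x + x') + eIdem S x := by rw [hxe]
    _ = x := by rw [add_assoc, hef, hxe]

theorem eIdem_add_self (hS : IsClifford S) (x : S) : eIdem S x + x = x := by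
  rw [add_comm, add_eIdem hS]

theorem eIdem_add_nsmul' (hS : IsClifford S) (x : S) (k : ℕ) :
    eIdem S x + nsmul' S k x = nsmul' S k x := by
  conv_lhs => rw [← nsmul'_of_add_self (eIdem_add_eIdem x) k]
  rw [← nsmul'_add, eIdem_add_self hS]

theorem isSubgroupSet_cyc (hS : IsClifford S) (x : S) : IsSubgroupSet S (cyc S x) := by
  refine ⟨?_, eIdem S x, ⟨_, rfl⟩, ?_, ?_⟩
  · rintro _ ⟨m, rfl⟩ _ ⟨n, rfl⟩
    exact ⟨m + n + 1, add_nsmul' m n x⟩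
  · rintro _ ⟨k, rfl⟩
    exact eIdem_add_nsmul' hS x k
  · rintro _ ⟨k, rfl⟩
    obtain ⟨j, hj⟩ := exists_nsmul'_add_eq_eIdem x k
    exact ⟨_, ⟨j, rfl⟩, hj⟩

end Clifford

section GreenClasses

variable {S}

theorem mem_HClass_self (a : S) : a ∈ HClass S a := ⟨Or.inl rfl, Or.inl rfl⟩

theorem gEq_symm {a b : S} (h : gEq S a b) : gEq S b a := ⟨h.2, h.1⟩

theorem gEq_trans {a b c : S} (h₁ : gEq S a b) (h₂ : gEq S b c) : gEq S a c :=
  ⟨gLe_trans S h₁.1 h₂.1, gLe_trans S h₂.2 h₁.2⟩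

theorem add_eq_of_gLe {e a x : S} (ha : e + a = a) (hx : gLe S x a) : e + x = x := by
  rcases hx with rfl | ⟨c, rfl⟩
  · exact ha
  · rw [← add_assoc, ha]

theorem eq_of_gEq_of_add_self {f g : S} (hf : f + f = f) (hg : g + g = g) (h : gEq S f g) :
    f = g :=
  calc f = g + f := (add_eq_of_gLe hg h.1).symm
    _ = g := by rw [add_comm, add_eq_of_gLe hf h.2]

theorem IsSubgroupSet.gLe_of_mem {T : Set S} (hT : IsSubgroupSet S T) {x y : S} (hx : x ∈ T)
    (hy : y ∈ T) : gLe S x y := by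
  obtain ⟨-, z, -, hz, hinv⟩ := hT
  obtain ⟨y', -, hy'⟩ := hinv y hy
  exact Or.inr ⟨y' + x, by rw [← add_assoc, hy', hz x hx]⟩

theorem IsSubgroupSet.eq_HClass_of_subset {T : Set S} (hT : IsSubgroupSet S T) {a : S}
    (h : HClass S a ⊆ T) : T = HClass S a := by
  have ha : a ∈ T := h (mem_HClass_self a)
  exact Set.Subset.antisymm (fun x hx => ⟨hT.gLe_of_mem hx ha, hT.gLe_of_mem ha hx⟩) h

variable [Finite S] (hS : IsClifford S)
include hS

theorem gEq_eIdem (x : S) : gEq S (eIdem S x) x :=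
  ⟨eIdem_gLe x, Or.inr ⟨x, (eIdem_add_self hS x).symm⟩⟩

theorem eIdem_eq_of_gEq {f y : S} (hf : f + f = f) (h : gEq S y f) : eIdem S y = f :=
  eq_of_gEq_of_add_self (eIdem_add_eIdem y) hf (gEq_trans (gEq_eIdem hS y) h)

theorem eIdem_add_of_mem_HClass {a x : S} (hx : x ∈ HClass S a) : eIdem S a + x = x :=
  add_eq_of_gLe (eIdem_add_self hS a) hx.1

theorem add_mem_HClass {a x y : S} (hx : x ∈ HClass S a) (hy : y ∈ HClass S a) :
    x + y ∈ HClass S a := by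
  have haa : gEq S (a + a) (eIdem S a) := by
    simpa only [eIdem_add_eIdem] using
      gEq_add S (gEq_symm (gEq_eIdem hS a)) (gEq_symm (gEq_eIdem hS a))
  exact gEq_trans (gEq_add S hx hy) (gEq_trans haa (gEq_eIdem hS a))

theorem add_mem_HClass_of_eIdem_add {x e : S} (h : eIdem S x + e = e) : x + e ∈ HClass S e := by
  have hx := gEq_add S (gEq_symm (gEq_eIdem hS x)) (mem_HClass_self e)
  rwa [h] at hx

theorem nsmul'_mem_HClass {a x : S} (hx : x ∈ HClass S a) (n : ℕ) :
    nsmul' S n x ∈ HClass S a := by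
  induction n with
  | zero => exact hx
  | succ n ih => exact add_mem_HClass hS hx ih

theorem isSubgroupSet_HClass (a : S) : IsSubgroupSet S (HClass S a) := by
  refine ⟨fun x hx y hy => add_mem_HClass hS hx hy, eIdem S a, gEq_eIdem hS a,
    fun x hx => eIdem_add_of_mem_HClass hS hx, fun x hx => ?_⟩
  obtain ⟨j, hj⟩ := exists_nsmul'_add_eq_eIdem x 0
  have hxa : eIdem S x = eIdem S a :=
    eIdem_eq_of_gEq hS (eIdem_add_eIdem a) (gEq_trans hx (gEq_symm (gEq_eIdem hS a)))
  exact ⟨nsmul' S j x, nsmul'_mem_HClass hS hx j, hj.trans hxa⟩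

def hClassSubsemigroup (a : S) : AddSubsemigroup S where
  carrier := HClass S a
  add_mem' := add_mem_HClass hS

end GreenClasses

section Schutzenberger

variable {S} [Finite S] (hS : IsClifford S)
include hS

theorem Gamma.apply_eq {a : S} (γ : Gamma S a) (x : HClass S a) :
    (γ.1 x : S) = γ.1 ⟨eIdem S a, gEq_eIdem hS a⟩ + x := by
  obtain ⟨c, -, hc⟩ := γ.2
  rw [hc, hc, add_assoc, eIdem_add_of_mem_HClass hS x.2]

noncomputable def gammaEquiv (a : S) : Gamma S a ≃+ hClassSubsemigroup hS a where
  toFun γ := ⟨γ.1 ⟨eIdem S a, gEq_eIdem hS a⟩, (γ.1 _).2⟩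
  invFun h := ⟨fun x => ⟨h + x, add_mem_HClass hS h.2 x.2⟩,
    h, fun _ hx => add_mem_HClass hS h.2 hx, fun _ => rfl⟩
  left_inv γ := Subtype.ext <| funext fun x => Subtype.ext (Gamma.apply_eq hS γ x).symm
  right_inv h := Subtype.ext <| (add_comm _ _).trans (eIdem_add_of_mem_HClass hS h.2)
  map_add' γ δ := Subtype.ext (Gamma.apply_eq hS γ (δ.1 _))

end Schutzenberger

section SemigroupAlgebra

open AddMonoidAlgebra

variable {R : Type*} [CommRing R] {T T' : Type*} [AddCommSemigroup T] [AddCommSemigroup T']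

theorem map_facX (f : T →ₙ+ T') (hf : Function.Injective f) (s : T) (r : R) :
    mapDomainRingHom R (WithZero.mapAddHom f) (facX R s r) = facX R (f s) r := by
  simp only [facX, Xm, map_sub, mapDomainRingHom_apply, mapDomain_single, WithZero.mapAddHom_coe,
    map_eIdem f hf]

theorem map_prod_facX {ι : Type*} [Fintype ι] (f : T →ₙ+ T') (hf : Function.Injective f)
    (s : ι → T) (r : ι → R) :
    mapDomainRingHom R (WithZero.mapAddHom f) (∏ i, facX R (s i) (r i)) =
      ∏ i, facX R (f (s i)) (r i) := by
  simp only [map_prod, map_facX f hf]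

theorem dd_le_of_injective (f : T →ₙ+ T') (hf : Function.Injective f) : dd R T ≤ dd R T' := by
  refine sSup_le_sSup ?_
  rintro _ ⟨ℓ, rfl, s, hs⟩
  refine ⟨ℓ, rfl, fun i => f (s i), fun r hr h0 => hs r hr ?_⟩
  apply mapDomain_injective (WithZero.mapAddHom_injective hf)
  rw [← mapDomainRingHom_apply, map_prod_facX f hf, h0, mapDomain_zero]

theorem dd_congr (e : T ≃+ T') : dd R T = dd R T' :=
  le_antisymm (dd_le_of_injective e.toAddHom e.injective)
    (dd_le_of_injective e.symm.toAddHom e.symm.injective)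

theorem Xm_mul_Xm (s t : T) : Xm R s 1 * Xm R t 1 = Xm R (s + t) 1 := by
  rw [Xm, Xm, Xm, single_mul_single, mul_one, WithZero.coe_add]

theorem facX_mul_Xm {s e : T} (h : eIdem T (s + e) = eIdem T s + e) (r : R) :
    facX R s r * Xm R e 1 = facX R (s + e) r := by
  rw [facX, facX, h, sub_mul, Xm_mul_Xm]
  simp only [Xm, single_mul_single, mul_one, WithZero.coe_add]

theorem prod_facX_add {ι : Type*} [Fintype ι] [Nonempty ι] (s : ι → T) (r : ι → R) {e : T}
    (he : e + e = e) (h : ∀ i, eIdem T (s i + e) = eIdem T (s i) + e) :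
    ∏ i, facX R (s i + e) (r i) = (∏ i, facX R (s i) (r i)) * Xm R e 1 := by
  have hX : IsIdempotentElem (Xm R e 1) := by rw [IsIdempotentElem, Xm_mul_Xm, he]
  simp only [← facX_mul_Xm (h _), Finset.prod_mul_distrib, Finset.prod_const,
    hX.pow_eq Finset.univ_nonempty.card_pos.ne']

end SemigroupAlgebra

section SumOfIdempotents

variable {T ι : Type*} [AddCommSemigroup T] [Fintype ι] {x : ι → T}

theorem exists_coe_eq_sum [Nonempty ι] (x : ι → T) :
    ∃ e : T, (e : WithZero T) = ∑ i, (x i : WithZero T) := by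
  classical
  obtain ⟨i⟩ := ‹Nonempty ι›
  rw [← Finset.add_sum_erase _ _ (Finset.mem_univ i)]
  generalize ∑ j ∈ Finset.univ.erase i, (x j : WithZero T) = w
  induction w using WithZero.recZeroCoe with
  | zero => exact ⟨x i, (add_zero _).symm⟩
  | coe c => exact ⟨x i + c, WithZero.coe_add _ _⟩

theorem add_self_of_coe_eq_sum (hx : ∀ i, x i + x i = x i) {e : T}
    (he : (e : WithZero T) = ∑ i, (x i : WithZero T)) : e + e = e := by
  apply WithZero.coe_injective
  rw [WithZero.coe_add, he, ← Finset.sum_add_distrib]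
  exact Finset.sum_congr rfl fun i _ => by rw [← WithZero.coe_add, hx]

theorem add_eq_of_coe_eq_sum (hx : ∀ i, x i + x i = x i) {e : T}
    (he : (e : WithZero T) = ∑ i, (x i : WithZero T)) (i : ι) : x i + e = e := by
  classical
  apply WithZero.coe_injective
  rw [WithZero.coe_add, he, ← Finset.add_sum_erase _ _ (Finset.mem_univ i), ← add_assoc,
    ← WithZero.coe_add, hx]

end SumOfIdempotents

section Absorption

open AddMonoidAlgebra

variable {S} [Finite S] (hS : IsClifford S) {R : Type*} [CommRing R]
include hS

theorem facX_mul_Xm_eIdem (s : S) (r : R) : facX R s r * Xm R (eIdem S s) 1 = facX R s r := by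
  rw [facX_mul_Xm (by rw [add_eIdem hS, eIdem_add_eIdem]), add_eIdem hS]

theorem prod_facX_add_sum_eIdem {ι : Type*} [Fintype ι] [Nonempty ι] (s : ι → S)
    (r : ι → R) {e : S} (he : (e : WithZero S) = ∑ i, (eIdem S (s i) : WithZero S)) :
    ∏ i, facX R (s i + e) (r i) = ∏ i, facX R (s i) (r i) := by
  have hidem : ∀ i, eIdem S (s i) + eIdem S (s i) = eIdem S (s i) := fun i => eIdem_add_eIdem _
  have he_idem : e + e = e := add_self_of_coe_eq_sum hidem he
  have hfix : (∏ i, facX R (s i) (r i)) * Xm R e 1 = ∏ i, facX R (s i) (r i) := by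
    rw [Xm, he, ← Finset.prod_const_one, ← prod_single, ← Finset.prod_mul_distrib]
    exact Finset.prod_congr rfl fun i _ => facX_mul_Xm_eIdem hS (s i) (r i)
  refine (prod_facX_add s r he_idem fun i => ?_).trans hfix
  rw [add_eq_of_coe_eq_sum hidem he i]
  exact eIdem_eq_of_gEq hS he_idem
    (add_mem_HClass_of_eIdem_add hS (add_eq_of_coe_eq_sum hidem he i))

theorem dd_le_iSup_dd_hClass : dd R S ≤ ⨆ a, dd R (hClassSubsemigroup hS a) := by
  refine sSup_le ?_
  rintro _ ⟨ℓ, rfl, s, hs⟩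
  rcases Nat.eq_zero_or_pos ℓ with rfl | hℓ
  · simp
  have : Nonempty (Fin ℓ) := ⟨⟨0, hℓ⟩⟩
  obtain ⟨e, he⟩ := exists_coe_eq_sum fun i => eIdem S (s i)
  have hmem : ∀ i, s i + e ∈ HClass S e := fun i => add_mem_HClass_of_eIdem_add hS
    (add_eq_of_coe_eq_sum (fun i => eIdem_add_eIdem (s i)) he i)
  refine le_iSup_of_le e <|
    le_sSup ⟨ℓ, rfl, fun i => ⟨s i + e, hmem i⟩, fun r hr h0 => hs r hr ?_⟩
  have himage := map_prod_facX (AddMemClass.subtype (hClassSubsemigroup hS e))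
    Subtype.val_injective (fun i => ⟨s i + e, hmem i⟩) r
  rw [h0, map_zero] at himage
  rw [← prod_facX_add_sum_eIdem hS s r he]
  exact himage.symm

end Absorption

theorem stmt2_general (S : Type*) [AddCommSemigroup S] [Fintype S]
    (hCl : ∀ a : S, ∃ a' : S, a + a' + a = a ∧ a' + a + a' = a')
    (K : Type*) [Field K] :
    (∀ a : S, IsSubgroupSet S (cyc S a)) ∧
    (∀ a : S, a ∈ HClass S a ∧ IsSubgroupSet S (HClass S a) ∧
      (∀ T : Set S, IsSubgroupSet S T → HClass S a ⊆ T → T = HClass S a) ∧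
      ∃ φ : Gamma S a ≃ ↥(HClass S a),
        ∀ γ δ : Gamma S a, (↑(φ (γ + δ)) : S) = ↑(φ γ) + ↑(φ δ)) ∧
    dd K S = (⨆ a : S, dd K (Gamma S a)) ∧
    dd K S = ⨆ (H : AddSubsemigroup S) (_ : IsSubgroupSet S ↑H), dd K ↥H := by
  have dd_subgroup_le : ∀ H : AddSubsemigroup S, dd K H ≤ dd K S :=
    fun H => dd_le_of_injective (AddMemClass.subtype H) Subtype.val_injective
  have dd_gamma : ∀ a, dd K (Gamma S a) = dd K (hClassSubsemigroup hCl a) :=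
    fun a => dd_congr (gammaEquiv hCl a)
  refine ⟨isSubgroupSet_cyc hCl, fun a => ⟨mem_HClass_self a, isSubgroupSet_HClass hCl a,
      fun T hT h => hT.eq_HClass_of_subset h, (gammaEquiv hCl a).toEquiv,
      fun γ δ => congrArg Subtype.val (map_add (gammaEquiv hCl a) γ δ)⟩, ?_, ?_⟩
  · refine le_antisymm ?_ (iSup_le fun a => (dd_gamma a).trans_le (dd_subgroup_le _))
    simpa only [dd_gamma] using dd_le_iSup_dd_hClass hCl
  · refine le_antisymm ?_ (iSup₂_le fun H _ => dd_subgroup_le H)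
    exact (dd_le_iSup_dd_hClass hCl).trans <| iSup_le fun a =>
      le_iSup₂_of_le (hClassSubsemigroup hCl a) (isSubgroupSet_HClass hCl a) le_rfl

/-- `d(S,K)` for finite commutative Clifford semigroups. -/
theorem stmt2 (S : Type*) [AddCommSemigroup S] [Fintype S] [Nonempty S]
    (hCl : ∀ a : S, ∃ a' : S, a + a' + a = a ∧ a' + a + a' = a')
    (K : Type*) [Field K]
    (hK : SplitField K (expS S) ∨
      ∃ p : ℕ, p.Prime ∧ CharP K p ∧ ∃ t : ℕ, expS S = p ^ t) :
    (∀ a : S, IsSubgroupSet S (cyc S a)) ∧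
    (∀ a : S, a ∈ HClass S a ∧ IsSubgroupSet S (HClass S a) ∧
      (∀ T : Set S, IsSubgroupSet S T → HClass S a ⊆ T → T = HClass S a) ∧
      ∃ φ : Gamma S a ≃ ↥(HClass S a),
        ∀ γ δ : Gamma S a, (↑(φ (γ + δ)) : S) = ↑(φ γ) + ↑(φ δ)) ∧
    dd K S = (⨆ a : S, dd K (Gamma S a)) ∧
    dd K S = ⨆ (H : AddSubsemigroup S) (_ : IsSubgroupSet S ↑H), dd K ↥H :=
  stmt2_general S hCl K

end ZS
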